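/- In the information algebra Φ of coherent sets of gambles, the following hold for x, y ∈ Q and D, D₁, D₂ ∈ Φ: (1) ε_x(L⁺) = L⁺; (2) ε_x(D) = L(Ω) iff D = L(Ω); (3) ε_x(ε_x(D)) = ε_x(D); (4) x ≤ y implies ε_x(D) ⊆ ε_y(D); (5) x ≤ y implies ε_y(ε_x(D)) = ε_x(D); (6) x ≤ y implies ε_x(ε_y(D)) = ε_x(D); (7) if ε_x(D₁) = D₁ and ε_x(D₂) = D₂ then ε_x(D₁·D₂) = D₁·D₂. -/
import Mathlib


/-- A gamble is a bounded function. -/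
def Bdd {Ω : Type*} (f : Ω → ℝ) : Prop := ∃ M : ℝ, ∀ ω, |f ω| ≤ M

/-- The set of all gambles (bounded functions) on `Ω`. -/
def L (Ω : Type*) : Set (Ω → ℝ) := {f | Bdd f}

/-- Nonnegative, nonzero gambles. -/
def Lpos (Ω : Type*) : Set (Ω → ℝ) := {f | Bdd f ∧ 0 ≤ f ∧ f ≠ 0}

/-- Coherent set of desirable gambles. -/
def Coherent {Ω : Type*} (D : Set (Ω → ℝ)) : Prop :=
  D ⊆ L Ω ∧ Lpos Ω ⊆ D ∧ (0 : Ω → ℝ) ∉ D ∧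
  (∀ f g : Ω → ℝ, f ∈ D → g ∈ D → f + g ∈ D) ∧
  (∀ (c : ℝ) (f : Ω → ℝ), f ∈ D → 0 < c → c • f ∈ D)

/-- `Φ(Ω)`: coherent sets together with the set of all gambles. -/
def Phi (Ω : Type*) : Set (Set (Ω → ℝ)) := {D | Coherent D} ∪ {L Ω}

/-- Closure operator associated to the topped ∩-structure `Φ`. -/
def Cl {Ω : Type*} (A : Set (Ω → ℝ)) : Set (Ω → ℝ) :=
  ⋂₀ {D | D ∈ Phi Ω ∧ A ⊆ D}

/-- `f` is `x`-measurable: constant on blocks of the partition of `x`. -/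
def Meas {Ω : Type*} (x : Setoid Ω) (f : Ω → ℝ) : Prop :=
  ∀ a b : Ω, x.r a b → f a = f b

/-- `L_x`: the linear space of `x`-measurable gambles. -/
def Lx {Ω : Type*} (x : Setoid Ω) : Set (Ω → ℝ) := {f | Bdd f ∧ Meas x f}

/-- Combination: `D₁ · D₂ := C(D₁ ∪ D₂)`. -/
def comb {Ω : Type*} (D₁ D₂ : Set (Ω → ℝ)) : Set (Ω → ℝ) := Cl (D₁ ∪ D₂)

/-- Extraction: `ε_x(D) := C(D ∩ L_x)`. -/
def eps {Ω : Type*} (x : Setoid Ω) (D : Set (Ω → ℝ)) : Set (Ω → ℝ) :=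
  Cl (D ∩ Lx x)


section Aux

variable {Ω : Type*}

lemma bdd_add' {f g : Ω → ℝ} (hf : Bdd f) (hg : Bdd g) : Bdd (f + g) := by
  obtain ⟨M, hM⟩ := hf; obtain ⟨N, hN⟩ := hg
  exact ⟨M + N, fun ω => (abs_add_le _ _).trans (add_le_add (hM ω) (hN ω))⟩

lemma bdd_smul' (c : ℝ) {f : Ω → ℝ} (hf : Bdd f) : Bdd (c • f) := by
  obtain ⟨M, hM⟩ := hf
  refine ⟨|c| * M, fun ω => ?_⟩
  simp only [Pi.smul_apply, smul_eq_mul, abs_mul]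
  exact mul_le_mul_of_nonneg_left (hM ω) (abs_nonneg c)

lemma Lpos_subset_L : Lpos Ω ⊆ L Ω := fun f hf => hf.1

lemma Lx_subset_L (z : Setoid Ω) : Lx z ⊆ L Ω := fun f hf => hf.1

lemma L_mem_Phi : L Ω ∈ Phi Ω := Or.inr rfl

lemma mem_Phi_subset_L {E : Set (Ω → ℝ)} (h : E ∈ Phi Ω) : E ⊆ L Ω := by
  rcases h with h | h
  · exact h.1
  · rw [Set.mem_singleton_iff] at h; rw [h]

lemma mem_Phi_Lpos {E : Set (Ω → ℝ)} (h : E ∈ Phi Ω) : Lpos Ω ⊆ E := by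
  rcases h with h | h
  · exact h.2.1
  · rw [Set.mem_singleton_iff] at h; rw [h]; exact Lpos_subset_L

lemma mem_Phi_add {E : Set (Ω → ℝ)} (h : E ∈ Phi Ω) :
    ∀ f g : Ω → ℝ, f ∈ E → g ∈ E → f + g ∈ E := by
  rcases h with h | h
  · exact h.2.2.2.1
  · rw [Set.mem_singleton_iff] at h; subst h
    exact fun f g hf hg => bdd_add' hf hg

lemma mem_Phi_smul {E : Set (Ω → ℝ)} (h : E ∈ Phi Ω) :
    ∀ (c : ℝ) (f : Ω → ℝ), f ∈ E → 0 < c → c • f ∈ E := by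
  rcases h with h | h
  · exact h.2.2.2.2
  · rw [Set.mem_singleton_iff] at h; subst h
    exact fun c f hf _ => bdd_smul' c hf

lemma subset_Cl (A : Set (Ω → ℝ)) : A ⊆ Cl A :=
  fun f hf => Set.mem_sInter.2 fun _ hE => hE.2 hf

lemma Cl_subset {A E : Set (Ω → ℝ)} (hE : E ∈ Phi Ω) (h : A ⊆ E) : Cl A ⊆ E :=
  fun f hf => (Set.mem_sInter.1 hf) E ⟨hE, h⟩

lemma Cl_mono {A B : Set (Ω → ℝ)} (h : A ⊆ B) : Cl A ⊆ Cl B :=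
  fun f hf => Set.mem_sInter.2 fun E hE =>
    (Set.mem_sInter.1 hf) E ⟨hE.1, h.trans hE.2⟩

lemma Lpos_subset_Cl (A : Set (Ω → ℝ)) : Lpos Ω ⊆ Cl A :=
  fun f hf => Set.mem_sInter.2 fun _ hE => mem_Phi_Lpos hE.1 hf

lemma Cl_mem_Phi {A : Set (Ω → ℝ)} (hA : A ⊆ L Ω) : Cl A ∈ Phi Ω := by
  by_cases h : ∃ E, Coherent E ∧ A ⊆ E
  · obtain ⟨E₀, hE₀, hAE₀⟩ := h
    have hE₀Phi : E₀ ∈ Phi Ω := Or.inl hE₀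
    left
    refine ⟨(Cl_subset hE₀Phi hAE₀).trans hE₀.1, Lpos_subset_Cl A, ?_, ?_, ?_⟩
    · intro h0
      exact hE₀.2.2.1 (Cl_subset hE₀Phi hAE₀ h0)
    · intro f g hf hg
      exact Set.mem_sInter.2 fun E hE =>
        mem_Phi_add hE.1 f g ((Set.mem_sInter.1 hf) E hE) ((Set.mem_sInter.1 hg) E hE)
    · intro c f hf hc
      exact Set.mem_sInter.2 fun E hE =>
        mem_Phi_smul hE.1 c f ((Set.mem_sInter.1 hf) E hE) hc
  · right
    rw [Set.mem_singleton_iff]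
    refine Set.Subset.antisymm (Cl_subset L_mem_Phi hA) ?_
    intro f hf
    refine Set.mem_sInter.2 fun E hE => ?_
    rcases hE.1 with hc | hL
    · exact absurd ⟨E, hc, hE.2⟩ h
    · rw [Set.mem_singleton_iff] at hL; rw [hL]; exact hf

lemma Cl_idem {A : Set (Ω → ℝ)} (hA : A ⊆ L Ω) : Cl (Cl A) = Cl A :=
  Set.Subset.antisymm (Cl_subset (Cl_mem_Phi hA) (subset_refl _)) (subset_Cl _)

lemma Lpos_coherent : Coherent (Lpos Ω) := by
  refine ⟨Lpos_subset_L, subset_refl _, fun h0 => h0.2.2 rfl, ?_, ?_⟩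
  · rintro f g ⟨hfb, hf0, hfne⟩ ⟨hgb, hg0, hgne⟩
    refine ⟨bdd_add' hfb hgb, fun ω => add_nonneg (hf0 ω) (hg0 ω), ?_⟩
    intro h
    apply hfne
    funext ω
    have h1 : f ω + g ω = 0 := congrFun h ω
    have := hf0 ω; have := hg0 ω
    simp only [Pi.zero_apply] at *
    linarith
  · rintro c f ⟨hfb, hf0, hfne⟩ hc
    refine ⟨bdd_smul' c hfb, fun ω => mul_nonneg hc.le (hf0 ω), ?_⟩
    intro h
    apply hfne
    funext ω
    have h1 : c * f ω = 0 := congrFun h ω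
    have := hf0 ω
    simp only [Pi.zero_apply] at *
    rcases mul_eq_zero.1 h1 with h2 | h2
    · exact absurd h2 hc.ne'
    · exact h2

lemma Cl_Lx (z : Setoid Ω) : Cl (Lx z) = L Ω := by
  refine Set.Subset.antisymm (Cl_subset L_mem_Phi (Lx_subset_L z)) ?_
  intro f hf
  refine Set.mem_sInter.2 fun E hE => ?_
  rcases hE.1 with hc | hL
  · exfalso
    have h1 : (fun _ : Ω => (1:ℝ)) ∈ Lx z := ⟨⟨1, fun ω => by norm_num⟩, fun a b _ => rfl⟩
    have h2 : (fun _ : Ω => (-1:ℝ)) ∈ Lx z := ⟨⟨1, fun ω => by norm_num⟩, fun a b _ => rfl⟩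
    have hsum := hc.2.2.2.1 _ _ (hE.2 h1) (hE.2 h2)
    have heq : (fun _ : Ω => (1:ℝ)) + (fun _ : Ω => (-1:ℝ)) = 0 := by
      funext ω; simp
    rw [heq] at hsum
    exact hc.2.2.1 hsum
  · rw [Set.mem_singleton_iff] at hL; rw [hL]; exact hf

lemma Lx_mono {x y : Setoid Ω} (h : ∀ a b : Ω, y.r a b → x.r a b) : Lx x ⊆ Lx y :=
  fun f hf => ⟨hf.1, fun a b hab => hf.2 a b (h a b hab)⟩

end Aux

/-- Elementary properties of combination and extraction in `Φ`.
Here `x ≤ y` means that the partition of `y` is finer: `≡_y ⊆ ≡_x`. -/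
theorem stmt16 {Ω : Type*} (x y : Setoid Ω) (D D₁ D₂ : Set (Ω → ℝ))
    (hD : D ∈ Phi Ω) (h₁ : D₁ ∈ Phi Ω) (h₂ : D₂ ∈ Phi Ω) :
    eps x (Lpos Ω) = Lpos Ω ∧
    (eps x D = L Ω ↔ D = L Ω) ∧
    eps x (eps x D) = eps x D ∧
    ((∀ a b : Ω, y.r a b → x.r a b) → eps x D ⊆ eps y D) ∧
    ((∀ a b : Ω, y.r a b → x.r a b) → eps y (eps x D) = eps x D) ∧
    ((∀ a b : Ω, y.r a b → x.r a b) → eps x (eps y D) = eps x D) ∧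
    (eps x D₁ = D₁ → eps x D₂ = D₂ → eps x (comb D₁ D₂) = comb D₁ D₂) := by
  have zero_mem_L : (0 : Ω → ℝ) ∈ L Ω := ⟨0, fun ω => by simp⟩
  refine ⟨?_, ?_, ?_, ?_, ?_, ?_, ?_⟩
  · -- (1)
    exact Set.Subset.antisymm
      (Cl_subset (Or.inl Lpos_coherent) Set.inter_subset_left)
      (Lpos_subset_Cl _)
  · -- (2)
    constructor
    · intro h
      rcases hD with hc | hL
      · exfalso
        have hsub : eps x D ⊆ D := Cl_subset (Or.inl hc) Set.inter_subset_left
        rw [h] at hsub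
        exact hc.2.2.1 (hsub zero_mem_L)
      · exact Set.mem_singleton_iff.1 hL
    · rintro rfl
      show Cl (L Ω ∩ Lx x) = L Ω
      rw [Set.inter_eq_self_of_subset_right (Lx_subset_L x)]
      exact Cl_Lx x
  · -- (3)
    have hAL : D ∩ Lx x ⊆ L Ω := Set.inter_subset_right.trans (Lx_subset_L x)
    refine Set.Subset.antisymm (Cl_subset (Cl_mem_Phi hAL) Set.inter_subset_left) ?_
    exact (Cl_mono fun f hf => ⟨subset_Cl _ hf, hf.2⟩ : Cl (D ∩ Lx x) ⊆ Cl (Cl (D ∩ Lx x) ∩ Lx x))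
  · -- (4)
    intro hle
    exact Cl_mono fun f hf => ⟨hf.1, Lx_mono hle hf.2⟩
  · -- (5)
    intro hle
    have hAL : D ∩ Lx x ⊆ L Ω := Set.inter_subset_right.trans (Lx_subset_L x)
    refine Set.Subset.antisymm (Cl_subset (Cl_mem_Phi hAL) Set.inter_subset_left) ?_
    exact (Cl_mono fun f hf => ⟨subset_Cl _ hf, Lx_mono hle hf.2⟩ :
      Cl (D ∩ Lx x) ⊆ Cl (Cl (D ∩ Lx x) ∩ Lx y))
  · -- (6)
    intro hle
    rcases hD with hc | hL
    · have h1 : Cl (D ∩ Lx y) ⊆ D := Cl_subset (Or.inl hc) Set.inter_subset_left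
      refine Set.Subset.antisymm ?_ ?_
      · exact Cl_mono fun f hf => ⟨h1 hf.1, hf.2⟩
      · exact Cl_mono fun f hf => ⟨subset_Cl _ ⟨hf.1, Lx_mono hle hf.2⟩, hf.2⟩
    · rw [Set.mem_singleton_iff] at hL; subst hL
      have hy : eps y (L Ω) = L Ω := by
        show Cl (L Ω ∩ Lx y) = L Ω
        rw [Set.inter_eq_self_of_subset_right (Lx_subset_L y)]
        exact Cl_Lx y
      rw [hy]
  · -- (7)
    intro e1 e2
    have hU : D₁ ∪ D₂ ⊆ L Ω :=
      Set.union_subset (mem_Phi_subset_L h₁) (mem_Phi_subset_L h₂)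
    have hE : comb D₁ D₂ ∈ Phi Ω := Cl_mem_Phi hU
    have hEL : comb D₁ D₂ ∩ Lx x ⊆ L Ω := Set.inter_subset_right.trans (Lx_subset_L x)
    refine Set.Subset.antisymm (Cl_subset hE Set.inter_subset_left) ?_
    have hsub : D₁ ∪ D₂ ⊆ Cl (comb D₁ D₂ ∩ Lx x) := by
      rintro f (hf | hf)
      · rw [← e1] at hf
        have hm : D₁ ∩ Lx x ⊆ comb D₁ D₂ ∩ Lx x :=
          fun g hg => ⟨subset_Cl (D₁ ∪ D₂) (Or.inl hg.1), hg.2⟩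
        exact Cl_mono hm hf
      · rw [← e2] at hf
        have hm : D₂ ∩ Lx x ⊆ comb D₁ D₂ ∩ Lx x :=
          fun g hg => ⟨subset_Cl (D₁ ∪ D₂) (Or.inr hg.1), hg.2⟩
        exact Cl_mono hm hf
    exact Cl_subset (Cl_mem_Phi hEL) hsub
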